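/- arXiv:math/0604492 — 2 statements merged into one kernel-verified Lean document; each statement's English description precedes it below -/
import Mathlib

section
/- Let G be a discrete finitely generated group, Σ a finite alphabet, and x ∈ Σ^G a Toeplitz array. Then x admits a period structure: there exists a decreasing sequence (Γ_n)_{n≥0} of finite-index subgroups of G such that each Γ_n is an essential group of periods of x and ⋃_{n≥0} Per(x, Γ_n) = G. -/
open Pointwise MeasureTheory

/-- The (left) shift action of `G` on `K^G`: `(γ • x) g = x (g γ)`. -/
instance shiftMulAction (G K : Type*) [Group G] : MulAction G (G → K) where
  smul γ x := fun g => x (g * γ)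
  one_smul x := funext fun g => congrArg x (mul_one g)
  mul_smul γ δ x := funext fun g => (congrArg x (mul_assoc g γ δ)).symm

/-- `Per(x, Γ, σ) = {g ∈ G : x (g γ) = σ for all γ ∈ Γ}`. -/
def PerSet {G A : Type*} [Group G] (x : G → A) (Γ : Subgroup G) (σ : A) : Set G :=
  {g : G | ∀ γ ∈ Γ, x (g * γ) = σ}

/-- `Per(x, Γ) = ⋃_σ Per(x, Γ, σ)`. -/
def Per {G A : Type*} [Group G] (x : G → A) (Γ : Subgroup G) : Set G :=
  ⋃ σ : A, PerSet x Γ σ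

/-- `x` is a `G`-Toeplitz array if every `g ∈ G` belongs to `Per(x, Γ)` for some
finite-index subgroup `Γ`. -/
def IsToeplitz {G A : Type*} [Group G] (x : G → A) : Prop :=
  ∀ g : G, ∃ Γ : Subgroup G, Γ.FiniteIndex ∧ g ∈ Per x Γ

/-- `Γ` is an essential group of periods of `x`: every `g ∈ G` with
`Per(x, Γ, σ) ⊆ Per(g • x, Γ, σ)` for all `σ` belongs to `Γ`. -/
def IsEssentialPeriodGroup {G A : Type*} [Group G] (x : G → A) (Γ : Subgroup G) : Prop :=
  ∀ g : G, (∀ σ : A, PerSet x Γ σ ⊆ PerSet (g • x) Γ σ) → g ∈ Γ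

/-!
Enumerate `G = {g₀, g₁, …}` (a finitely generated group is countable) and let `Δₙ` be the
intersection of normal finite-index subgroups `Nᵢ`, `i ≤ n`, with `gᵢ ∈ Per(x, Nᵢ)`. The `Δₙ`
decrease and their periodic parts cover `G`, but need not be essential. Replace `Δ` by the
submonoid of those `g` with `Per(x, Δ, σ) g ⊆ Per(x, Δ, σ)` for all `σ`: it contains `Δ`, so it
is a finite-index subgroup, it has the same periodic parts as `Δ`, and it is essential because
for normal `Δ` the condition `Per(x, Δ, σ) ⊆ Per(g • x, Δ, σ)` says exactly `Per(x, Δ, σ) g ⊆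
Per(x, Δ, σ)`.
-/

theorem Group.countable_of_fg (G : Type*) [Group G] [Group.FG G] : Countable G := by
  obtain ⟨α, _, φ, hφ⟩ := Group.fg_iff_exists_freeGroup_hom_surjective_finite.mp ‹_›
  exact hφ.countable

theorem Submonoid.inv_mem_of_le {G : Type*} [Group G] {M : Submonoid G} {Δ : Subgroup G}
    [Δ.Normal] [Δ.FiniteIndex] (hΔ : Δ.toSubmonoid ≤ M) {g : G} (hg : g ∈ M) : g⁻¹ ∈ M := by
  obtain ⟨k, hk⟩ := Nat.exists_eq_succ_of_ne_zero (Subgroup.FiniteIndex.index_ne_zero (H := Δ))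
  have hpow : (g ^ (k + 1))⁻¹ ∈ M := hΔ (Δ.inv_mem (by simpa [hk] using Δ.pow_index_mem g))
  have hinv : g⁻¹ = g ^ k * (g ^ (k + 1))⁻¹ := by group
  exact hinv ▸ M.mul_mem (M.pow_mem hg k) hpow

section PeriodStabilizer

variable {G A : Type*} [Group G] (x : G → A)

theorem perSet_anti {Δ' Δ : Subgroup G} (hle : Δ' ≤ Δ) (σ : A) :
    PerSet x Δ σ ⊆ PerSet x Δ' σ :=
  fun _ hh γ hγ => hh γ (hle hγ)

theorem per_anti {Δ' Δ : Subgroup G} (hle : Δ' ≤ Δ) : Per x Δ ⊆ Per x Δ' :=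
  Set.iUnion_mono fun σ => perSet_anti x hle σ

variable {x}

theorem apply_eq_of_mem_perSet {Δ : Subgroup G} {σ : A} {h : G} (hh : h ∈ PerSet x Δ σ) :
    x h = σ := by
  simpa using hh 1 Δ.one_mem

theorem mul_mem_perSet {Δ : Subgroup G} {σ : A} {h δ : G} (hh : h ∈ PerSet x Δ σ)
    (hδ : δ ∈ Δ) : h * δ ∈ PerSet x Δ σ := fun γ hγ => by
  simpa only [mul_assoc] using hh _ (Δ.mul_mem hδ hγ)

theorem mem_perSet_smul_iff {Δ : Subgroup G} [Δ.Normal] {σ : A} {g h : G} :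
    h ∈ PerSet (g • x) Δ σ ↔ h * g ∈ PerSet x Δ σ := by
  change (∀ γ ∈ Δ, x (h * γ * g) = σ) ↔ ∀ γ ∈ Δ, x (h * g * γ) = σ
  constructor
  · intro hx γ hγ
    simpa [mul_assoc] using hx _ (Subgroup.Normal.conj_mem ‹_› γ hγ g)
  · intro hx γ hγ
    simpa [mul_assoc] using hx _ (Subgroup.Normal.conj_mem ‹_› γ hγ g⁻¹)

variable (x)

def perSetStabilizer (Δ : Subgroup G) : Submonoid G where
  carrier := {g | ∀ σ, ∀ h ∈ PerSet x Δ σ, h * g ∈ PerSet x Δ σ}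
  one_mem' := by simp
  mul_mem' ha hb σ h hh := by simpa only [mul_assoc] using hb σ _ (ha σ h hh)

theorem le_perSetStabilizer (Δ : Subgroup G) : Δ.toSubmonoid ≤ perSetStabilizer x Δ :=
  fun _ hδ _ _ hh => mul_mem_perSet hh hδ

def periodStabilizer (Δ : Subgroup G) [Δ.Normal] [Δ.FiniteIndex] : Subgroup G :=
  { perSetStabilizer x Δ with
    inv_mem' := Submonoid.inv_mem_of_le (le_perSetStabilizer x Δ) }

variable (Δ : Subgroup G) [Δ.Normal] [Δ.FiniteIndex]

theorem le_periodStabilizer : Δ ≤ periodStabilizer x Δ :=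
  le_perSetStabilizer x Δ

instance : (periodStabilizer x Δ).FiniteIndex :=
  Subgroup.finiteIndex_of_le (le_periodStabilizer x Δ)

theorem perSet_periodStabilizer (σ : A) : PerSet x (periodStabilizer x Δ) σ = PerSet x Δ σ :=
  (perSet_anti x (le_periodStabilizer x Δ) σ).antisymm fun _ hh _ hg =>
    apply_eq_of_mem_perSet (hg σ _ hh)

theorem per_periodStabilizer : Per x (periodStabilizer x Δ) = Per x Δ := by
  simp only [Per, perSet_periodStabilizer]

theorem isEssentialPeriodGroup_periodStabilizer :
    IsEssentialPeriodGroup x (periodStabilizer x Δ) := by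
  intro g hg σ h hh
  rw [← perSet_periodStabilizer x Δ] at hh
  exact mem_perSet_smul_iff.mp (perSet_anti _ (le_periodStabilizer x Δ) σ (hg σ hh))

theorem periodStabilizer_mono {Δ' : Subgroup G} [Δ'.Normal] [Δ'.FiniteIndex] (hle : Δ' ≤ Δ) :
    periodStabilizer x Δ' ≤ periodStabilizer x Δ := by
  intro g hg σ h hh
  refine mem_perSet_smul_iff.mp fun γ hγ => ?_
  exact (apply_eq_of_mem_perSet (hg σ _ (perSet_anti x hle σ (mul_mem_perSet hh hγ))) :
    x (h * γ * g) = σ)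

end PeriodStabilizer

theorem IsToeplitz.exists_antitone_normal_cover {G A : Type*} [Group G] [Countable G]
    {x : G → A} (hx : IsToeplitz x) :
    ∃ Δ : ℕ → Subgroup G, (∀ n, Δ (n + 1) ≤ Δ n) ∧ (∀ n, (Δ n).Normal) ∧
      (∀ n, (Δ n).FiniteIndex) ∧ (⋃ n, Per x (Δ n)) = Set.univ := by
  obtain ⟨e, he⟩ := exists_surjective_nat G
  have hN : ∀ n, ∃ N : Subgroup G, N.Normal ∧ N.FiniteIndex ∧ e n ∈ Per x N := fun n => by
    obtain ⟨Γ, hΓ, hmem⟩ := hx (e n)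
    exact ⟨Γ.normalCore, inferInstance, inferInstance, per_anti x Γ.normalCore_le hmem⟩
  choose N hNnormal hNfinite hmem using hN
  refine ⟨fun n => ⨅ i : Fin (n + 1), N i, fun n => ?_,
    fun n => Subgroup.normal_iInf_normal fun i => hNnormal i,
    fun n => Subgroup.finiteIndex_iInf fun i => hNfinite i, ?_⟩
  · exact le_iInf fun i => iInf_le_of_le i.castSucc le_rfl
  · refine Set.eq_univ_of_forall fun g => ?_
    obtain ⟨n, rfl⟩ := he g
    exact Set.mem_iUnion.mpr ⟨n, per_anti x (iInf_le _ (Fin.last n)) (hmem n)⟩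

theorem statement16_general {G A : Type*} [Group G] [Group.FG G]
    (x : G → A) (hx : IsToeplitz x) :
    ∃ Γ : ℕ → Subgroup G,
      (∀ n, Γ (n + 1) ≤ Γ n) ∧ (∀ n, (Γ n).FiniteIndex) ∧
      (∀ n, IsEssentialPeriodGroup x (Γ n)) ∧
      (⋃ n, Per x (Γ n)) = Set.univ := by
  have := Group.countable_of_fg G
  obtain ⟨Δ, hanti, hnormal, hfinite, hcover⟩ := hx.exists_antitone_normal_cover
  refine ⟨fun n => periodStabilizer x (Δ n), fun n => periodStabilizer_mono x _ (hanti n),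
    fun n => inferInstance, fun n => isEssentialPeriodGroup_periodStabilizer x (Δ n), ?_⟩
  simpa only [per_periodStabilizer] using hcover

/-- Corollary `estructura`: every Toeplitz array admits a period
structure: a decreasing sequence of finite-index essential groups of periods `(Γₙ)` with
`⋃ₙ Per(x, Γₙ) = G`. -/
theorem statement16 {G A : Type*} [Group G] [Group.FG G] [Finite A]
    (x : G → A) (hx : IsToeplitz x) :
    ∃ Γ : ℕ → Subgroup G,
      (∀ n, Γ (n + 1) ≤ Γ n) ∧ (∀ n, (Γ n).FiniteIndex) ∧
      (∀ n, IsEssentialPeriodGroup x (Γ n)) ∧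
      (⋃ n, Per x (Γ n)) = Set.univ :=
  statement16_general x hx
end

section
/- Let G be a discrete finitely generated group, Σ a finite alphabet, x ∈ Σ^G a Toeplitz array, and y ∈ Ω_G(x). If Γ is a finite-index subgroup of G which is an essential group of periods of y, then Ω_Γ(y) = C_Γ(y); moreover C_Γ(y) is clopen, g·C_Γ(y) = g'·C_Γ(y) whenever g and g' lie in the same left coset of Γ (so w·C_Γ(y) is well defined for w ∈ G/Γ), the set of return times of every point of C_Γ(y) to C_Γ(y) is exactly Γ, and the family {w·C_Γ(y) : w ∈ G/Γ} is a clopen partition of Ω_G(x). -/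
open Pointwise MeasureTheory

/-- The set of return times of `x` to `A`: `T_A(x) = {g ∈ G : g • x ∈ A}`. -/
def ReturnTimes (G : Type*) {X : Type*} [SMul G X] (x : X) (A : Set X) : Set G :=
  {g : G | g • x ∈ A}

/-- A point `x` is regularly recurrent if every open neighborhood of `x` contains the
`Γ`-orbit of `x` for some finite-index subgroup `Γ` of `G`. -/
def RegularlyRecurrent (G : Type*) {X : Type*} [Group G] [TopologicalSpace X] [MulAction G X]
    (x : X) : Prop :=
  ∀ V : Set X, IsOpen V → x ∈ V →
    ∃ Γ : Subgroup G, Γ.FiniteIndex ∧ (Γ : Set G) ⊆ ReturnTimes G x V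

/-- A point `x` is strongly regularly recurrent if every open neighborhood `V` of `x`
contains a clopen neighborhood `W` of `x` whose return-time set `T_W(x)` is a
finite-index normal subgroup of `G`. -/
def StronglyRegularlyRecurrent (G : Type*) {X : Type*} [Group G] [TopologicalSpace X]
    [MulAction G X] (x : X) : Prop :=
  ∀ V : Set X, IsOpen V → x ∈ V →
    ∃ W : Set X, IsClopen W ∧ x ∈ W ∧ W ⊆ V ∧
      ∃ Γ : Subgroup G, Γ.Normal ∧ Γ.FiniteIndex ∧ ReturnTimes G x W = (Γ : Set G)

/-- `Ω_G(x)`: the closure of the `G`-orbit of `x` in `A^G`. -/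
def OmegaG (G : Type*) {A : Type*} [Group G] [TopologicalSpace A] (x : G → A) : Set (G → A) :=
  closure (Set.range fun g : G => g • x)

lemma smul_mem_omegaG (G : Type*) {A : Type*} [Group G] [TopologicalSpace A] {x z : G → A}
    (g : G) (hz : z ∈ OmegaG G x) : g • z ∈ OmegaG G x := by
  unfold OmegaG at hz ⊢
  have hc : Continuous fun w : G → A => g • w := continuous_pi fun h => continuous_apply (h * g)
  have himg : (fun w : G → A => g • w) '' (Set.range fun h : G => h • x)
      = Set.range fun h : G => h • x := by
    ext w; constructor
    · rintro ⟨_, ⟨h, rfl⟩, rfl⟩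
      refine ⟨g * h, ?_⟩
      show (g * h) • x = g • (h • x)
      rw [mul_smul]
    · rintro ⟨h, rfl⟩
      refine ⟨(g⁻¹ * h) • x, ⟨g⁻¹ * h, rfl⟩, ?_⟩
      show g • ((g⁻¹ * h) • x) = h • x
      rw [← mul_smul, mul_inv_cancel_left]
  have h1 : g • z ∈ (fun w : G → A => g • w) '' closure (Set.range fun h : G => h • x) :=
    ⟨z, hz, rfl⟩
  have h2 := image_closure_subset_closure_image (f := fun w : G → A => g • w)
    (s := Set.range fun h : G => h • x) hc
  rw [himg] at h2
  exact h2 h1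

lemma self_mem_omegaG (G : Type*) {A : Type*} [Group G] [TopologicalSpace A] (x : G → A) :
    x ∈ OmegaG G x :=
  subset_closure ⟨1, one_smul G x⟩

/-- The subshift `Ω_G(x)` as a topological dynamical system. -/
def OmegaSub (G : Type*) {A : Type*} [Group G] [TopologicalSpace A] (x : G → A) : Type _ :=
  { z : G → A // z ∈ OmegaG G x }

instance (G : Type*) {A : Type*} [Group G] [TopologicalSpace A] (x : G → A) :
    TopologicalSpace (OmegaSub G x) :=
  instTopologicalSpaceSubtype

instance (G : Type*) {A : Type*} [Group G] [TopologicalSpace A] (x : G → A) :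
    MulAction G (OmegaSub G x) where
  smul g z := ⟨g • z.1, smul_mem_omegaG G g z.2⟩
  one_smul z := Subtype.ext (one_smul G z.1)
  mul_smul a b z := Subtype.ext (mul_smul a b z.1)

/-- `C_Γ(y)`: the set of elements of `Ω_G(x)` with exactly the same `Γ`-periodic parts
as `y`. -/
def CSet {G A : Type*} [Group G] [TopologicalSpace A] (x y : G → A) (Γ : Subgroup G) :
    Set (G → A) :=
  {z : G → A | z ∈ OmegaG G x ∧ ∀ σ : A, PerSet z Γ σ = PerSet y Γ σ}

/-!
A Toeplitz array is regularly recurrent, so its orbit closure is minimal; and since `Γ` has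
finite index, every orbit closure `closure (G • z)` is the finite union of the translates
`u • closure (Γ • z)`. Limits of `Γ`-translates can only enlarge periodic parts. Hence if
`z ∈ Ω_G(x)` and `Per(y, Γ) ⊆ Per(z, Γ)`, minimality puts `y` in some `u • closure (Γ • z)`,
essentiality of `Γ` forces `u ∈ Γ`, so `y ∈ closure (Γ • z)` and `Per(z, Γ) = Per(y, Γ)`.
Running the same argument through the double coset `Γ w Γ` shows that `w • z ∈ C_Γ(y)` with
`z ∈ closure (Γ • y)` forces `w ∈ Γ`. This yields `closure (Γ • y) = C_Γ(y)`, the return times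
and the disjointness of translates; minimality gives the covering.
-/

section OrbitClosure

variable {G X : Type*} [Group G] [MulAction G X]

theorem image_smul_eq_smul_image (z : X) (u : G) (S : Set G) :
    (fun g : G => g • z) '' (u • S) = u • ((fun g : G => g • z) '' S) :=
  Set.image_smul_comm _ u S fun g => mul_smul u g z

theorem smul_eq_smul_of_le_stabilizer {Γ : Subgroup G} {K : Set X}
    (hK : Γ ≤ MulAction.stabilizer G K) {u v : G} (huv : u⁻¹ * v ∈ Γ) : u • K = v • K := by
  rw [← mul_inv_cancel_left u v, mul_smul, MulAction.mem_stabilizer_iff.mp (hK huv)]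

variable [TopologicalSpace X] [ContinuousConstSMul G X]

theorem le_stabilizer_closure_image (Γ : Subgroup G) (z : X) :
    Γ ≤ MulAction.stabilizer G (closure ((fun g : G => g • z) '' (Γ : Set G))) := by
  intro γ hγ
  rw [MulAction.mem_stabilizer_iff, ← closure_smul, ← image_smul_eq_smul_image, smul_coe_set hγ]

theorem isClosed_biUnion_smul {Γ : Subgroup G} [Γ.FiniteIndex] {K : Set X} (hKc : IsClosed K)
    (hK : Γ ≤ MulAction.stabilizer G K) (S : Set G) : IsClosed (⋃ g ∈ S, g • K) := by
  -- `g • K` only depends on the coset `gΓ`, so the union is finite.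
  have hfin : ((fun g : G => g • K) '' S).Finite := by
    refine (Set.finite_range fun q : G ⧸ Γ => q.out • K).subset ?_
    rintro _ ⟨g, -, rfl⟩
    exact ⟨g, smul_eq_smul_of_le_stabilizer hK (QuotientGroup.eq.mp (QuotientGroup.out_eq' _))⟩
  rw [← Set.sUnion_image, Set.sUnion_eq_biUnion]
  exact hfin.isClosed_biUnion fun _ ⟨g, _, hg⟩ => hg ▸ hKc.smul g

theorem exists_mem_smul_closure_of_mem_closure_image {Γ : Subgroup G} [Γ.FiniteIndex] {y z : X}
    {S : Set G} (hy : y ∈ closure ((fun g : G => g • z) '' S)) :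
    ∃ u ∈ S, y ∈ u • closure ((fun g : G => g • z) '' (Γ : Set G)) := by
  have hsub : (fun g : G => g • z) '' S ⊆
      ⋃ u ∈ S, u • closure ((fun g : G => g • z) '' (Γ : Set G)) := by
    rintro _ ⟨g, hg, rfl⟩
    exact Set.mem_biUnion hg
      (Set.smul_mem_smul_set (subset_closure ⟨1, Γ.one_mem, one_smul G z⟩))
  have hclosed := isClosed_biUnion_smul isClosed_closure (le_stabilizer_closure_image Γ z) S
  simpa only [Set.mem_iUnion, exists_prop] using closure_minimal hsub hclosed hy

theorem closure_image_subset_of_mem_closure_image {y z : X} {S : Set G}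
    (hz : z ∈ closure ((fun g : G => g • y) '' S)) (T : Set G) :
    closure ((fun g : G => g • z) '' T) ⊆ closure ((fun g : G => g • y) '' (T * S)) := by
  refine closure_minimal ?_ isClosed_closure
  rintro _ ⟨t, ht, rfl⟩
  have : t • z ∈ closure ((fun g : G => g • y) '' (t • S)) := by
    rw [image_smul_eq_smul_image, closure_smul]
    exact Set.smul_mem_smul_set hz
  exact closure_mono (Set.image_mono (Set.smul_set_subset_mul ht)) this

end OrbitClosure

section RegularlyRecurrent

variable {G X : Type*} [Group G] [TopologicalSpace X] [RegularSpace X] [MulAction G X]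
  [ContinuousConstSMul G X]

theorem RegularlyRecurrent.mem_closure_range_smul {x z : X} (hx : RegularlyRecurrent G x)
    (hz : z ∈ closure (Set.range fun g : G => g • x)) :
    x ∈ closure (Set.range fun g : G => g • z) := by
  refine mem_closure_iff_nhds.mpr fun t ht => ?_
  obtain ⟨V, hV, hVc, hVt⟩ := exists_mem_nhds_isClosed_subset ht
  obtain ⟨Λ, hΛ, hΛV⟩ := hx (interior V) isOpen_interior (mem_interior_iff_mem_nhds.mpr hV)
  have hΛx : closure ((fun g : G => g • x) '' (Λ : Set G)) ⊆ V :=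
    closure_minimal (Set.image_subset_iff.mpr fun γ hγ => interior_subset (s := V) (hΛV hγ)) hVc
  rw [← Set.image_univ] at hz
  obtain ⟨u, -, hu⟩ := exists_mem_smul_closure_of_mem_closure_image (Γ := Λ) hz
  exact ⟨u⁻¹ • z, hVt (hΛx (Set.mem_smul_set_iff_inv_smul_mem.mp hu)), u⁻¹, rfl⟩

theorem RegularlyRecurrent.closure_range_smul_subset {x z : X} (hx : RegularlyRecurrent G x)
    (hz : z ∈ closure (Set.range fun g : G => g • x)) :
    closure (Set.range fun g : G => g • x) ⊆ closure (Set.range fun g : G => g • z) := by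
  have := closure_image_subset_of_mem_closure_image
    (Set.image_univ.symm ▸ hx.mem_closure_range_smul hz) Set.univ
  rwa [Set.univ_mul_univ, Set.image_univ, Set.image_univ] at this

end RegularlyRecurrent

section Shift

variable {G A : Type*} [Group G]

@[simp]
theorem shift_apply (γ : G) (z : G → A) (g : G) : (γ • z) g = z (g * γ) := rfl

theorem apply_mul_eq_of_mem_per {x : G → A} {Γ : Subgroup G} {g γ : G} (hg : g ∈ Per x Γ)
    (hγ : γ ∈ Γ) : x (g * γ) = x g := by
  obtain ⟨σ, hσ⟩ := Set.mem_iUnion.mp hg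
  rw [hσ γ hγ, ← mul_one g, hσ 1 Γ.one_mem]

theorem perSet_smul_of_mem {Γ : Subgroup G} {γ : G} (hγ : γ ∈ Γ) (z : G → A) (σ : A) :
    PerSet (γ • z) Γ σ = PerSet z Γ σ := by
  ext g
  refine ⟨fun h δ hδ => ?_, fun h δ hδ => ?_⟩
  · simpa [mul_assoc] using h (δ * γ⁻¹) (Γ.mul_mem hδ (Γ.inv_mem hγ))
  · simpa [mul_assoc] using h (δ * γ) (Γ.mul_mem hδ hγ)

variable [TopologicalSpace A]

instance shiftContinuousConstSMul : ContinuousConstSMul G (G → A) where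
  continuous_const_smul γ := continuous_pi fun g => continuous_apply (g * γ)

theorem IsToeplitz.regularlyRecurrent [DiscreteTopology A] {x : G → A} (hx : IsToeplitz x) :
    RegularlyRecurrent G x := by
  intro V hV hxV
  obtain ⟨I, u, hu, hIV⟩ := isOpen_pi_iff.mp hV x hxV
  choose Γ hΓ hxΓ using hx
  have : ∀ f : I, (Γ f).FiniteIndex := fun f => hΓ f
  refine ⟨⨅ f : I, Γ f, Subgroup.finiteIndex_iInf fun f => hΓ f, fun γ hγ => hIV fun f hf => ?_⟩
  have hγf : γ ∈ Γ f := Subgroup.mem_iInf.mp hγ ⟨f, hf⟩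
  change x (f * γ) ∈ u f
  rw [apply_mul_eq_of_mem_per (hxΓ f) hγf]
  exact (hu f hf).2

theorem isClosed_setOf_mem_perSet [T1Space A] (Γ : Subgroup G) (g : G) (σ : A) :
    IsClosed {z : G → A | g ∈ PerSet z Γ σ} := by
  have h : {z : G → A | g ∈ PerSet z Γ σ} = ⋂ γ ∈ Γ, {z | z (g * γ) = σ} := by
    ext; simp [PerSet]
  exact h ▸ isClosed_biInter fun γ _ => isClosed_singleton.preimage (continuous_apply (g * γ))

theorem perSet_subset_of_mem_closure_image [T1Space A] {Γ : Subgroup G} {z w : G → A}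
    (hw : w ∈ closure ((fun g : G => g • z) '' (Γ : Set G))) (σ : A) :
    PerSet z Γ σ ⊆ PerSet w Γ σ := by
  intro g hg
  refine closure_minimal ?_ (isClosed_setOf_mem_perSet Γ g σ) hw
  rintro _ ⟨γ, hγ, rfl⟩
  change g ∈ PerSet (γ • z) Γ σ
  rwa [perSet_smul_of_mem hγ]

end Shift

section EssentialPeriods

variable {G A : Type*} [Group G] [TopologicalSpace A] {x y z : G → A} {Γ : Subgroup G}

theorem IsEssentialPeriodGroup.mem_of_mem_smul_closure_image [T1Space A]
    (hess : IsEssentialPeriodGroup y Γ) (hz : ∀ σ, PerSet y Γ σ ⊆ PerSet z Γ σ) {u : G}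
    (hu : y ∈ u • closure ((fun g : G => g • z) '' (Γ : Set G))) : u ∈ Γ :=
  Γ.inv_mem_iff.mp <| hess u⁻¹ fun σ => (hz σ).trans <|
    perSet_subset_of_mem_closure_image (Set.mem_smul_set_iff_inv_smul_mem.mp hu) σ

variable [DiscreteTopology A] [Γ.FiniteIndex]

theorem exists_mem_smul_closure_image_of_mem_omegaG (hx : IsToeplitz x) (hy : y ∈ OmegaG G x)
    {c : G → A} (hc : c ∈ OmegaG G x) :
    ∃ u : G, c ∈ u • closure ((fun g : G => g • y) '' (Γ : Set G)) := by
  have hcy := hx.regularlyRecurrent.closure_range_smul_subset hy hc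
  rw [← Set.image_univ] at hcy
  obtain ⟨u, -, hu⟩ := exists_mem_smul_closure_of_mem_closure_image (Γ := Γ) hcy
  exact ⟨u, hu⟩

theorem mem_closure_image_of_perSet_subset (hx : IsToeplitz x) (hy : y ∈ OmegaG G x)
    (hess : IsEssentialPeriodGroup y Γ) (hz : z ∈ OmegaG G x)
    (hyz : ∀ σ, PerSet y Γ σ ⊆ PerSet z Γ σ) :
    y ∈ closure ((fun g : G => g • z) '' (Γ : Set G)) := by
  have hzy := hx.regularlyRecurrent.closure_range_smul_subset hz hy
  rw [← Set.image_univ] at hzy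
  obtain ⟨u, -, hu⟩ := exists_mem_smul_closure_of_mem_closure_image (Γ := Γ) hzy
  rwa [MulAction.mem_stabilizer_iff.mp
    (le_stabilizer_closure_image Γ z (hess.mem_of_mem_smul_closure_image hyz hu))] at hu

theorem closure_image_subset_CSet (hx : IsToeplitz x) (hy : y ∈ OmegaG G x)
    (hess : IsEssentialPeriodGroup y Γ) :
    closure ((fun g : G => g • y) '' (Γ : Set G)) ⊆ CSet x y Γ := by
  intro w hw
  have hwΩ : w ∈ OmegaG G x := by
    refine closure_minimal ?_ isClosed_closure hw
    rintro _ ⟨γ, -, rfl⟩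
    exact smul_mem_omegaG G γ hy
  have hyw σ : PerSet y Γ σ ⊆ PerSet w Γ σ := perSet_subset_of_mem_closure_image hw σ
  exact ⟨hwΩ, fun σ => (hyw σ).antisymm' <| perSet_subset_of_mem_closure_image
    (mem_closure_image_of_perSet_subset hx hy hess hwΩ hyw) σ⟩

theorem mem_of_smul_mem_CSet_of_mem_closure_image (hx : IsToeplitz x) (hy : y ∈ OmegaG G x)
    (hess : IsEssentialPeriodGroup y Γ) (hz : z ∈ closure ((fun g : G => g • y) '' (Γ : Set G)))
    {w : G} (hwz : w • z ∈ CSet x y Γ) : w ∈ Γ := by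
  have hwzy : w • z ∈ closure ((fun g : G => g • y) '' ({w} * (Γ : Set G))) :=
    closure_image_subset_of_mem_closure_image hz {w} (subset_closure ⟨w, rfl, rfl⟩)
  have hyy : y ∈ closure ((fun g : G => g • y) '' ((Γ : Set G) * ({w} * (Γ : Set G)))) :=
    closure_image_subset_of_mem_closure_image hwzy Γ
      (mem_closure_image_of_perSet_subset hx hy hess hwz.1 fun σ => (hwz.2 σ).ge)
  obtain ⟨u, ⟨γ₁, hγ₁, _, ⟨_, rfl, γ₂, hγ₂, rfl⟩, rfl⟩, hu⟩ :=
    exists_mem_smul_closure_of_mem_closure_image (Γ := Γ) hyy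
  have hu := hess.mem_of_mem_smul_closure_image (fun σ => subset_rfl) hu
  simpa [mul_assoc] using Γ.mul_mem (Γ.mul_mem (Γ.inv_mem hγ₁) hu) (Γ.inv_mem hγ₂)

theorem closure_image_eq_CSet (hx : IsToeplitz x) (hy : y ∈ OmegaG G x)
    (hess : IsEssentialPeriodGroup y Γ) :
    closure ((fun g : G => g • y) '' (Γ : Set G)) = CSet x y Γ := by
  refine (closure_image_subset_CSet hx hy hess).antisymm fun c hc => ?_
  obtain ⟨u, c', hc', rfl⟩ := exists_mem_smul_closure_image_of_mem_omegaG (Γ := Γ) hx hy hc.1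
  have hu := mem_of_smul_mem_CSet_of_mem_closure_image hx hy hess hc' hc
  rw [← MulAction.mem_stabilizer_iff.mp (le_stabilizer_closure_image Γ y hu)]
  exact Set.smul_mem_smul_set hc'

theorem mem_of_smul_mem_CSet (hx : IsToeplitz x) (hy : y ∈ OmegaG G x)
    (hess : IsEssentialPeriodGroup y Γ) (hz : z ∈ CSet x y Γ) {w : G}
    (hwz : w • z ∈ CSet x y Γ) : w ∈ Γ :=
  mem_of_smul_mem_CSet_of_mem_closure_image hx hy hess
    ((closure_image_eq_CSet hx hy hess).symm ▸ hz) hwz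

theorem le_stabilizer_CSet (hx : IsToeplitz x) (hy : y ∈ OmegaG G x)
    (hess : IsEssentialPeriodGroup y Γ) : Γ ≤ MulAction.stabilizer G (CSet x y Γ) :=
  closure_image_eq_CSet hx hy hess ▸ le_stabilizer_closure_image Γ y

theorem disjoint_smul_CSet (hx : IsToeplitz x) (hy : y ∈ OmegaG G x)
    (hess : IsEssentialPeriodGroup y Γ) {g g' : G} (hgg' : g⁻¹ * g' ∉ Γ) :
    Disjoint (g • CSet x y Γ) (g' • CSet x y Γ) := by
  refine Set.disjoint_left.mpr ?_
  rintro _ ⟨c, hc, rfl⟩ ⟨c', hc', he⟩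
  refine hgg' (mem_of_smul_mem_CSet hx hy hess hc' ?_)
  rwa [mul_smul, show g' • c' = g • c from he, inv_smul_smul]

theorem iUnion_smul_CSet (hx : IsToeplitz x) (hy : y ∈ OmegaG G x)
    (hess : IsEssentialPeriodGroup y Γ) : (⋃ g : G, g • CSet x y Γ) = OmegaG G x := by
  refine (Set.iUnion_subset fun g => ?_).antisymm fun c hc => ?_
  · rintro _ ⟨c, hc, rfl⟩
    exact smul_mem_omegaG G g hc.1
  · obtain ⟨u, hu⟩ := exists_mem_smul_closure_image_of_mem_omegaG (Γ := Γ) hx hy hc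
    exact Set.mem_iUnion.mpr ⟨u, closure_image_eq_CSet hx hy hess ▸ hu⟩

theorem exists_isOpen_CSet_eq_inter (hx : IsToeplitz x) (hy : y ∈ OmegaG G x)
    (hess : IsEssentialPeriodGroup y Γ) :
    ∃ U : Set (G → A), IsOpen U ∧ CSet x y Γ = U ∩ OmegaG G x := by
  have hstab := le_stabilizer_CSet hx hy hess
  have hclosed : IsClosed (CSet x y Γ) := closure_image_eq_CSet hx hy hess ▸ isClosed_closure
  refine ⟨(⋃ g ∈ (Γ : Set G)ᶜ, g • CSet x y Γ)ᶜ,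
    (isClosed_biUnion_smul hclosed hstab _).isOpen_compl, Set.ext fun c => ⟨fun hc => ?_, ?_⟩⟩
  · refine ⟨?_, hc.1⟩
    simp only [Set.mem_compl_iff, Set.mem_iUnion, not_exists]
    intro g hg hcg
    refine Set.disjoint_left.mp (disjoint_smul_CSet hx hy hess (g' := 1) ?_) hcg
      (by rwa [one_smul])
    simpa using hg
  · rintro ⟨hcU, hcΩ⟩
    obtain ⟨g, hcg⟩ := Set.mem_iUnion.mp ((iUnion_smul_CSet hx hy hess).symm ▸ hcΩ)
    by_cases hg : g ∈ Γ
    · rwa [MulAction.mem_stabilizer_iff.mp (hstab hg)] at hcg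
    · exact absurd (Set.mem_iUnion₂.mpr ⟨g, hg, hcg⟩) hcU

end EssentialPeriods

theorem statement17_general {G A : Type*} [Group G]
    [TopologicalSpace A] [DiscreteTopology A]
    (x : G → A) (hx : IsToeplitz x) (y : G → A) (hy : y ∈ OmegaG G x)
    (Γ : Subgroup G) (hfin : Γ.FiniteIndex) (hess : IsEssentialPeriodGroup y Γ) :
    closure ((fun g : G => g • y) '' (Γ : Set G)) = CSet x y Γ ∧
    IsClosed (CSet x y Γ) ∧
    (∃ U : Set (G → A), IsOpen U ∧ CSet x y Γ = U ∩ OmegaG G x) ∧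
    (∀ g g' : G, g⁻¹ * g' ∈ Γ → g • CSet x y Γ = g' • CSet x y Γ) ∧
    (∀ z ∈ CSet x y Γ, ReturnTimes G z (CSet x y Γ) = (Γ : Set G)) ∧
    (∀ g g' : G, g⁻¹ * g' ∉ Γ → Disjoint (g • CSet x y Γ) (g' • CSet x y Γ)) ∧
    (⋃ g : G, g • CSet x y Γ) = OmegaG G x := by
  have hC := closure_image_eq_CSet hx hy hess
  have hstab := le_stabilizer_CSet hx hy hess
  refine ⟨hC, hC ▸ isClosed_closure, exists_isOpen_CSet_eq_inter hx hy hess,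
    fun g g' => smul_eq_smul_of_le_stabilizer hstab, fun z hz => ?_,
    fun g g' => disjoint_smul_CSet hx hy hess, iUnion_smul_CSet hx hy hess⟩
  ext g
  refine ⟨mem_of_smul_mem_CSet hx hy hess hz, fun hg => ?_⟩
  change g • z ∈ CSet x y Γ
  rw [← MulAction.mem_stabilizer_iff.mp (hstab hg)]
  exact Set.smul_mem_smul_set hz

/-- Proposition `particion`: for `y ∈ Ω_G(x)` and `Γ` an essential
group of periods of `y`, one has `Ω_Γ(y) = C_Γ(y)`, the set `C_Γ(y)` is relatively
clopen, its translates are well defined on cosets, its return times are exactly `Γ`, and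
`{w ⬝ C_Γ(y)}_{w ∈ G/Γ}` is a clopen partition of `Ω_G(x)`. -/
theorem statement17 {G A : Type*} [Group G] [Group.FG G] [Finite A]
    [TopologicalSpace A] [DiscreteTopology A]
    (x : G → A) (hx : IsToeplitz x) (y : G → A) (hy : y ∈ OmegaG G x)
    (Γ : Subgroup G) (hfin : Γ.FiniteIndex) (hess : IsEssentialPeriodGroup y Γ) :
    closure ((fun g : G => g • y) '' (Γ : Set G)) = CSet x y Γ ∧
    IsClosed (CSet x y Γ) ∧
    (∃ U : Set (G → A), IsOpen U ∧ CSet x y Γ = U ∩ OmegaG G x) ∧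
    (∀ g g' : G, g⁻¹ * g' ∈ Γ → g • CSet x y Γ = g' • CSet x y Γ) ∧
    (∀ z ∈ CSet x y Γ, ReturnTimes G z (CSet x y Γ) = (Γ : Set G)) ∧
    (∀ g g' : G, g⁻¹ * g' ∉ Γ → Disjoint (g • CSet x y Γ) (g' • CSet x y Γ)) ∧
    (⋃ g : G, g • CSet x y Γ) = OmegaG G x :=
  statement17_general x hx y hy Γ hfin hess
end
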